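/- Let G be a labeled block graph, let B' be a support block of G, let c_i ∈ C\{c_h} be a cut vertex of B', let B_{ij} be an end block of G whose unique cut vertex is c_i, and let s_max = max{ s(v) : v ∈ V(B_{ij})\{c_i} }. Then γ(G) = γ(G'), where G' is the labeled block graph obtained from G by relabelling max{s_max − |r(V(B_{ij}))|, 0} vertices of B_{ij} that have t-label B as R, with priority given to c_i, and keeping every other label the same. -/

import Mathlib

open SimpleGraph
open scoped Classical

/-- The two possible t-labels of a vertex of a labeled block graph. -/
inductive TLabel
  | B
  | R
deriving DecidableEq

/-- A labeled graph: a graph together with labels `M_V(v) = (t v, s v)` on vertices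
and `k e` on (potential) edges. -/
structure LBG (V : Type*) where
  graph : SimpleGraph V
  t : V → TLabel
  s : V → ℕ
  k : Sym2 V → ℕ

variable {V : Type*}

/-- closed neighbourhood `N_G[v]` -/
def cN (G : SimpleGraph V) (v : V) : Set V := insert v {u | G.Adj v u}

/-- open neighbourhood `N_G(v)` -/
def oN (G : SimpleGraph V) (v : V) : Set V := {u | G.Adj v u}

/-- closed neighbourhood `N_G[e]` of an edge -/
def eN (G : SimpleGraph V) (e : Sym2 V) : Set V := {w | ∃ x ∈ e, w ∈ cN G x}

/-- `r(S)`: the vertices of `S` with t-label `R`. -/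
def rSet (H : LBG V) (S : Set V) : Set V := {v | v ∈ S ∧ H.t v = TLabel.R}

/-- An `M_{LVE}`-dominating set of a labeled graph. -/
def IsMLVE (H : LBG V) (L : Set V) : Prop :=
  (∀ v, H.t v = TLabel.R → v ∈ L) ∧
  (∀ v, H.s v ≤ (cN H.graph v ∩ L).ncard) ∧
  (∀ e ∈ H.graph.edgeSet, H.k e ≤ (eN H.graph e ∩ L).ncard) ∧
  (∀ e ∈ H.graph.edgeSet, ∀ f ∈ H.graph.edgeSet, e ≠ f →
    H.k e + H.k f - 1 ≤ ((eN H.graph e ∪ eN H.graph f) ∩ L).ncard)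

/-- `γ(G)`: the minimum cardinality of an `M_{LVE}`-dominating set. -/
noncomputable def gam (H : LBG V) : ℕ :=
  sInf {n | ∃ L : Set V, IsMLVE H L ∧ L.ncard = n}

/-- A liar's vertex-edge dominating set. -/
def IsLiarVE (G : SimpleGraph V) (L : Set V) : Prop :=
  (∀ e ∈ G.edgeSet, 2 ≤ (eN G e ∩ L).ncard) ∧
  (∀ e ∈ G.edgeSet, ∀ f ∈ G.edgeSet, e ≠ f → 3 ≤ ((eN G e ∪ eN G f) ∩ L).ncard)

/-- `v` is a cut vertex of `G`: removing it disconnects two vertices that were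
connected in `G`. -/
def IsCutVertex (G : SimpleGraph V) (v : V) : Prop :=
  ∃ x y : {u : V // u ≠ v}, G.Reachable x.1 y.1 ∧
    ¬ (G.induce {u : V | u ≠ v}).Reachable ⟨x.1, x.2⟩ ⟨y.1, y.2⟩

/-- A vertex set inducing a connected subgraph without a cut vertex. -/
def GoodSet (G : SimpleGraph V) (Bs : Set V) : Prop :=
  (G.induce Bs).Connected ∧ ∀ v, ¬ IsCutVertex (G.induce Bs) v

/-- A block of `G`: a maximal connected subgraph without a cut vertex. -/
def IsBlock (G : SimpleGraph V) (Bs : Set V) : Prop :=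
  GoodSet G Bs ∧ ∀ Bs' : Set V, Bs ⊆ Bs' → GoodSet G Bs' → Bs' = Bs

/-- A block graph: every block is a clique. -/
def IsBlockGraph (G : SimpleGraph V) : Prop :=
  ∀ Bs : Set V, IsBlock G Bs → G.IsClique Bs

/-- `Bs` is an end block of `G` whose unique cut vertex is `c`. -/
def EndBlockWith (G : SimpleGraph V) (Bs : Set V) (c : V) : Prop :=
  IsBlock G Bs ∧ c ∈ Bs ∧ IsCutVertex G c ∧ ∀ c' ∈ Bs, IsCutVertex G c' → c' = c

/-- The cut-tree of `G`: vertices are the blocks and the cut vertices of `G`,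
with an edge joining a block to each cut vertex it contains. -/
def cutTree (G : SimpleGraph V) :
    SimpleGraph ({Bs : Set V // IsBlock G Bs} ⊕ {v : V // IsCutVertex G v}) :=
  SimpleGraph.fromRel (fun a b =>
    match a, b with
    | Sum.inl Bs, Sum.inr c => (c : V) ∈ (Bs : Set V)
    | _, _ => False)

/-- Distance to the root `ρ` (a cut vertex) in the cut-tree. -/
noncomputable def rootDist (G : SimpleGraph V) (ρ : {v : V // IsCutVertex G v})
    (x : {Bs : Set V // IsBlock G Bs} ⊕ {v : V // IsCutVertex G v}) : ℕ :=
  (cutTree G).dist x (Sum.inr ρ)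

/-- `Bi` is a descendant block of `Bj` in the cut-tree rooted at `ρ`:
`Bj` is the parent of the parent of `Bi`. -/
def IsDescBlock (G : SimpleGraph V) (ρ : {v : V // IsCutVertex G v})
    (Bj Bi : {Bs : Set V // IsBlock G Bs}) : Prop :=
  ∃ c : {v : V // IsCutVertex G v}, (c : V) ∈ (Bi : Set V) ∧ (c : V) ∈ (Bj : Set V) ∧
    rootDist G ρ (Sum.inr c) + 1 = rootDist G ρ (Sum.inl Bi) ∧
    rootDist G ρ (Sum.inl Bj) + 1 = rootDist G ρ (Sum.inr c)

/-- A support block: all of its descendant blocks are end blocks of `G`. -/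
def IsSupportBlock (G : SimpleGraph V) (ρ : {v : V // IsCutVertex G v})
    (B' : {Bs : Set V // IsBlock G Bs}) : Prop :=
  ∀ Bi, IsDescBlock G ρ B' Bi → ∃ c : V, EndBlockWith G (Bi : Set V) c

/-- The edges of (the subgraph induced by) a block `Bs`. -/
def blockEdges (G : SimpleGraph V) (Bs : Set V) : Set (Sym2 V) :=
  {e | e ∈ G.edgeSet ∧ ∀ x ∈ e, x ∈ Bs}

/-- Relabel all vertices of `A` with t-label `R`, keeping every other label the same. -/
noncomputable def relabelR (H : LBG V) (A : Set V) : LBG V :=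
  { H with t := fun v => if v ∈ A then TLabel.R else H.t v }

/-- `l_2(c)`: the number of edges of the end blocks whose unique cut vertex is `c`
that are incident to `c` and have k-label `2`. -/
noncomputable def l2cut (H : LBG V) (c : V) : ℕ :=
  ({e : Sym2 V | (∃ Bs : Set V, EndBlockWith H.graph Bs c ∧ e ∈ blockEdges H.graph Bs) ∧
     c ∈ e ∧ H.k e = 2}).ncard

/-!
In a block graph every vertex `v ≠ c` of an end block `K` with cut vertex `c` has closed
neighbourhood exactly `K`: a neighbour `u ∉ K` could be joined to `c` by a path avoiding the
non-cut vertex `v`, and `K` together with the cycle `v u ⋯ c v` would be a larger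
2-connected set. Hence every vertex or edge neighbourhood either contains `K` or meets it only
in `c`. A dominating set `L` has at least `s_max = |r(K) ∪ A|` vertices in `K`, so its part in
`K` can be traded for an equally large subset of `K` containing `r(K) ∪ A`, hence `c`; this
changes no neighbourhood count downwards, so both labelings have the same minimum.
-/
namespace SimpleGraph

variable {G : SimpleGraph V}

lemma preconnected_induce_of_forall_walk {T : Set V} (r : V)
    (h : ∀ z ∈ T, ∃ p : G.Walk z r, ∀ x ∈ p.support, x ∈ T) : (G.induce T).Preconnected := by
  have reach : ∀ z : T, (G.induce T).Reachable z ⟨r, ?_⟩ := fun z => by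
    obtain ⟨p, hp⟩ := h z z.2
    exact ⟨p.induce T hp⟩
  · exact fun x y => (reach x).trans (reach y).symm
  · obtain ⟨p, hp⟩ := h z z.2
    exact hp r p.end_mem_support

lemma IsClique.exists_walk {K : Set V} (hK : G.IsClique K) {z r : V} (hz : z ∈ K) (hr : r ∈ K) :
    ∃ p : G.Walk z r, ∀ x ∈ p.support, x = z ∨ x = r := by
  by_cases hzr : z = r
  · subst hzr
    exact ⟨.nil, by simp⟩
  · exact ⟨.cons (hK hz hr hzr) .nil, by simp⟩

lemma Walk.IsPath.exists_walk_avoiding {a b : V} {Q : G.Walk a b}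
    (hQ : Q.IsPath) {z w : V} (hz : z ∈ Q.support) (hwz : w ≠ z) :
    (∃ p : G.Walk z a, ∀ x ∈ p.support, x ∈ Q.support ∧ x ≠ w) ∨
      ∃ p : G.Walk z b, ∀ x ∈ p.support, x ∈ Q.support ∧ x ≠ w := by
  have hnodup := hQ.support_nodup
  rw [← Q.take_spec hz, Walk.support_append] at hnodup
  by_cases hw : w ∈ (Q.takeUntil z hz).support
  · refine .inr ⟨Q.dropUntil z hz, fun x hx => ⟨Q.support_dropUntil_subset_support hz hx, ?_⟩⟩
    rintro rfl
    rw [← (Q.dropUntil z hz).cons_tail_support] at hx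
    exact (List.nodup_append.mp hnodup).2.2 _ hw _ ((List.mem_cons.mp hx).resolve_left hwz) rfl
  · refine .inl ⟨(Q.takeUntil z hz).reverse, fun x hx => ?_⟩
    rw [Walk.support_reverse, List.mem_reverse] at hx
    exact ⟨Q.support_takeUntil_subset_support hz hx, by rintro rfl; exact hw hx⟩

end SimpleGraph

lemma goodSet_of_preconnected_sdiff {G : SimpleGraph V} {S : Set V} (hS : (G.induce S).Connected)
    (h : ∀ w ∈ S, (G.induce (S \ {w})).Preconnected) : GoodSet G S := by
  refine ⟨hS, fun w ⟨x, y, _, hxy⟩ => hxy ?_⟩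
  let f : G.induce (S \ {w.1}) →g (G.induce S).induce {u | u ≠ w} :=
    ⟨fun z => ⟨⟨z.1, z.2.1⟩, fun hz => z.2.2 (congrArg Subtype.val hz)⟩, fun hadj => hadj⟩
  exact (h w w.2 ⟨x, x.1.2, fun hx => x.2 (Subtype.ext hx)⟩
    ⟨y, y.1.2, fun hy => y.2 (Subtype.ext hy)⟩).map f

lemma SimpleGraph.IsClique.goodSet_union_support {G : SimpleGraph V} {K : Set V}
    (hK : G.IsClique K) {a b : V} (ha : a ∈ K) (hb : b ∈ K) (hab : a ≠ b) {Q : G.Walk a b}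
    (hQ : Q.IsPath) : GoodSet G (K ∪ {x | x ∈ Q.support}) := by
  have walk_in : ∀ {T : Set V} {y r : V}, y ∈ K → r ∈ K → y ∈ T → r ∈ T →
      ∃ p : G.Walk y r, ∀ x ∈ p.support, x ∈ T := fun hy hr hyT hrT =>
    (hK.exists_walk hy hr).imp fun _ hp x hx => (hp x hx).elim (· ▸ hyT) (· ▸ hrT)
  refine goodSet_of_preconnected_sdiff
    (induce_union_connected (preconnected_induce_of_forall_walk a fun z hz => walk_in hz ha hz ha)
      Q.connected_induce_support.preconnected ⟨a, ha, Q.start_mem_support⟩) fun w _ => ?_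
  obtain ⟨r, hrK, hrw⟩ : ∃ r ∈ K, r ≠ w := by
    by_cases haw : a = w
    · exact ⟨b, hb, haw ▸ hab.symm⟩
    · exact ⟨a, ha, haw⟩
  have to_anchor : ∀ y ∈ K, y ≠ w →
      ∃ p : G.Walk y r, ∀ x ∈ p.support, x ∈ (K ∪ {x | x ∈ Q.support}) \ {w} :=
    fun y hy hyw => walk_in hy hrK ⟨.inl hy, hyw⟩ ⟨.inl hrK, hrw⟩
  have via : ∀ {z y : V} (p : G.Walk z y), (∀ x ∈ p.support, x ∈ Q.support ∧ x ≠ w) → y ∈ K →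
      ∃ p : G.Walk z r, ∀ x ∈ p.support, x ∈ (K ∪ {x | x ∈ Q.support}) \ {w} := by
    intro z y p hp hy
    obtain ⟨q, hq⟩ := to_anchor y hy (hp y p.end_mem_support).2
    refine ⟨p.append q, fun x hx => ?_⟩
    rcases (Walk.mem_support_append_iff _ _).mp hx with hx | hx
    · exact ⟨.inr (hp x hx).1, (hp x hx).2⟩
    · exact hq x hx
  refine preconnected_induce_of_forall_walk r fun z ⟨hzS, hzw⟩ => ?_
  rcases hzS with hzK | hzQ
  · exact to_anchor z hzK hzw
  · rcases hQ.exists_walk_avoiding hzQ (Ne.symm hzw) with ⟨p, hp⟩ | ⟨p, hp⟩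
    · exact via p hp ha
    · exact via p hp hb

lemma EndBlockWith.mem_of_adj {G : SimpleGraph V} (hBG : IsBlockGraph G) {K : Set V} {c : V}
    (hK : EndBlockWith G K c) {v u : V} (hv : v ∈ K) (hvc : v ≠ c) (hvu : G.Adj v u) : u ∈ K := by
  by_contra hu
  have hclique := hBG K hK.1
  have huv : u ≠ v := hvu.ne.symm
  obtain ⟨P, hP⟩ : ∃ P : (G.induce {x | x ≠ v}).Walk ⟨u, huv⟩ ⟨c, hvc.symm⟩, P.IsPath := by
    by_contra hno
    refine hvc (hK.2.2.2 v hv ⟨⟨u, huv⟩, ⟨c, hvc.symm⟩,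
      hvu.symm.reachable.trans (hclique hv hK.2.1 hvc).reachable, fun ⟨P⟩ => hno ?_⟩)
    exact ⟨P.bypass, P.bypass_isPath⟩
  let ι : G.induce {x | x ≠ v} ↪g G := Embedding.induce _
  have hvP : v ∉ (P.map ι.toHom).support := by
    simp only [Walk.support_map, List.mem_map, not_exists, not_and]
    exact fun x _ hx => x.2 hx
  have hgood := hclique.goodSet_union_support hv hK.2.1 hvc
    ((hP.map ι.injective).cons hvP (h := hvu))
  refine hu (hK.1.2 _ Set.subset_union_left hgood ▸ Or.inr ?_)
  exact List.mem_cons_of_mem _ (Walk.start_mem_support _)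

lemma EndBlockWith.cN_eq {G : SimpleGraph V} (hBG : IsBlockGraph G) {K : Set V} {c : V}
    (hK : EndBlockWith G K c) {v : V} (hv : v ∈ K) (hvc : v ≠ c) : cN G v = K := by
  ext u
  refine ⟨fun hu => (Set.mem_insert_iff.mp hu).elim (· ▸ hv) (hK.mem_of_adj hBG hv hvc), ?_⟩
  intro hu
  by_cases huv : u = v
  · exact huv ▸ Set.mem_insert u _
  · exact Set.mem_insert_of_mem _ (hBG K hK.1 hv hu (Ne.symm huv))

def CoversOrTouches (K : Set V) (c : V) (T : Set V) : Prop :=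
  K ⊆ T ∨ T ∩ K ⊆ {c}

lemma CoversOrTouches.union {K T₁ T₂ : Set V} {c : V} (h₁ : CoversOrTouches K c T₁)
    (h₂ : CoversOrTouches K c T₂) : CoversOrTouches K c (T₁ ∪ T₂) := by
  rcases h₁ with h₁ | h₁
  · exact .inl (h₁.trans Set.subset_union_left)
  rcases h₂ with h₂ | h₂
  · exact .inl (h₂.trans Set.subset_union_right)
  · exact .inr (Set.union_inter_distrib_right .. ▸ Set.union_subset h₁ h₂)

lemma eN_mk (G : SimpleGraph V) (x y : V) : eN G s(x, y) = cN G x ∪ cN G y := by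
  ext w
  simp [eN]

lemma CoversOrTouches.eN {G : SimpleGraph V} {K : Set V} {c : V}
    (h : ∀ x, CoversOrTouches K c (cN G x)) (e : Sym2 V) : CoversOrTouches K c (eN G e) := by
  induction e using Sym2.ind with
  | _ x y => exact eN_mk G x y ▸ (h x).union (h y)

lemma EndBlockWith.coversOrTouches_cN {G : SimpleGraph V} (hBG : IsBlockGraph G) {K : Set V}
    {c : V} (hK : EndBlockWith G K c) (x : V) : CoversOrTouches K c (cN G x) := by
  by_cases hxK : x ∈ K
  · by_cases hxc : x = c
    · subst hxc
      refine .inl fun y hy => ?_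
      by_cases hyx : y = x
      · exact hyx ▸ Set.mem_insert y _
      · exact Set.mem_insert_of_mem _ (hBG K hK.1 hK.2.1 hy (Ne.symm hyx))
    · exact .inl (hK.cN_eq hBG hxK hxc).ge
  · refine .inr fun y ⟨hxy, hyK⟩ => by_contra fun hyc => hxK ?_
    rcases Set.mem_insert_iff.mp hxy with rfl | hadj
    · exact hyK
    · exact hK.cN_eq hBG hyK hyc ▸ Set.mem_insert_of_mem _ hadj.symm

section Exchange

variable [Finite V] {K L L' : Set V}

lemma exists_exchange {P : Set V} (hPK : P ⊆ K) (hP : P.ncard ≤ (L ∩ K).ncard) :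
    ∃ L', L' \ K = L \ K ∧ P ⊆ L' ∧ (L' ∩ K).ncard = (L ∩ K).ncard := by
  obtain ⟨M, hPM, hMK, hM⟩ :=
    Set.exists_subsuperset_card_eq hPK hP (Set.ncard_le_ncard Set.inter_subset_right)
  refine ⟨(L \ K) ∪ M, ?_, hPM.trans Set.subset_union_right, ?_⟩
  · rw [Set.union_sdiff_distrib, Set.sdiff_sdiff, Set.union_self, Set.sdiff_eq_empty.mpr hMK,
      Set.union_empty]
  · rw [Set.union_inter_distrib_right, Set.sdiff_inter_self, Set.empty_union,
      Set.inter_eq_left.mpr hMK, hM]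

lemma ncard_eq_of_exchange (hdiff : L' \ K = L \ K)
    (hcard : (L' ∩ K).ncard = (L ∩ K).ncard) : L'.ncard = L.ncard := by
  rw [← Set.ncard_inter_add_ncard_sdiff_eq_ncard L' K,
    ← Set.ncard_inter_add_ncard_sdiff_eq_ncard L K, hdiff, hcard]

lemma ncard_inter_le_of_exchange {T : Set V} {c : V} (hT : CoversOrTouches K c T)
    (hdiff : L' \ K = L \ K) (hcard : (L' ∩ K).ncard = (L ∩ K).ncard) (hc : c ∈ L') :
    (T ∩ L).ncard ≤ (T ∩ L').ncard := by
  rcases hT with hKT | hTK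
  · have split : ∀ X : Set V, (T ∩ X).ncard = (X ∩ K).ncard + (T ∩ (X \ K)).ncard := fun X => by
      rw [← Set.ncard_inter_add_ncard_sdiff_eq_ncard (T ∩ X) K, Set.inter_assoc,
        Set.inter_eq_right.mpr (Set.inter_subset_right.trans hKT), Set.inter_sdiff_assoc]
    rw [split L, split L', hdiff, hcard]
  · refine Set.ncard_le_ncard fun x ⟨hxT, hxL⟩ => ⟨hxT, ?_⟩
    by_cases hxK : x ∈ K
    · exact (hTK ⟨hxT, hxK⟩ : x = c) ▸ hc
    · exact (hdiff.symm ▸ ⟨hxL, hxK⟩ : x ∈ L' \ K).1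

end Exchange

lemma relabelR_empty (H : LBG V) : relabelR H ∅ = H := by
  simp [relabelR]

lemma IsMLVE.of_relabelR {H : LBG V} {A L : Set V} (h : IsMLVE (relabelR H A) L) :
    IsMLVE H L := by
  refine ⟨fun v hv => h.1 v ?_, h.2⟩
  simp only [relabelR]
  split_ifs <;> simp [hv]

lemma gam_relabelR_eq {H : LBG V} {A : Set V}
    (h : ∀ L, IsMLVE H L → ∃ L', IsMLVE (relabelR H A) L' ∧ L'.ncard = L.ncard) :
    gam (relabelR H A) = gam H := by
  unfold gam
  congr 1
  ext n
  constructor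
  · rintro ⟨L, hL, rfl⟩
    exact ⟨L, hL.of_relabelR, rfl⟩
  · rintro ⟨L, hL, rfl⟩
    exact h L hL

lemma IsMLVE.relabelR_of_exchange [Finite V] {H : LBG V} {K A L L' : Set V} {c : V}
    (hN : ∀ x, CoversOrTouches K c (cN H.graph x)) (hL : IsMLVE H L)
    (hdiff : L' \ K = L \ K) (hcard : (L' ∩ K).ncard = (L ∩ K).ncard) (hc : c ∈ L')
    (hRA : rSet H K ∪ A ⊆ L') : IsMLVE (relabelR H A) L' := by
  have count {T : Set V} (hT : CoversOrTouches K c T) : (T ∩ L).ncard ≤ (T ∩ L').ncard :=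
    ncard_inter_le_of_exchange hT hdiff hcard hc
  refine ⟨fun v hv => ?_, fun v => (hL.2.1 v).trans (count (hN v)),
    fun e he => (hL.2.2.1 e he).trans (count (.eN hN e)),
    fun e he f hf hef =>
      (hL.2.2.2 e he f hf hef).trans (count ((CoversOrTouches.eN hN e).union (.eN hN f)))⟩
  by_cases hvA : v ∈ A
  · exact hRA (.inr hvA)
  have hvR : H.t v = TLabel.R := by simpa [relabelR, hvA] using hv
  by_cases hvK : v ∈ K
  · exact hRA (.inl ⟨hvK, hvR⟩)
  · exact (hdiff.symm ▸ ⟨hL.1 v hvR, hvK⟩ : v ∈ L' \ K).1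

lemma exists_s_eq_ncard_rSet_union [Finite V] {H : LBG V} {K A : Set V} {c : V}
    (hAsub : A ⊆ {v | v ∈ K ∧ H.t v = TLabel.B})
    (hAcard : A.ncard = sSup {n : ℕ | ∃ v, v ∈ K ∧ v ≠ c ∧ H.s v = n} - (rSet H K).ncard)
    (hA : A.Nonempty) : ∃ v ∈ K, v ≠ c ∧ (rSet H K ∪ A).ncard = H.s v := by
  set S := {n : ℕ | ∃ v, v ∈ K ∧ v ≠ c ∧ H.s v = n}
  have hApos : 0 < A.ncard := hA.ncard_pos
  have hS : S.Nonempty := by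
    by_contra hS
    rw [Set.not_nonempty_iff_eq_empty.mp hS, csSup_empty, Nat.bot_eq_zero] at hAcard
    omega
  have hSbdd : BddAbove S :=
    ((Set.finite_range H.s).subset (by rintro _ ⟨v, -, -, rfl⟩; exact ⟨v, rfl⟩)).bddAbove
  obtain ⟨v, hv, hvc, hsv⟩ : sSup S ∈ S := Nat.sSup_mem hS hSbdd
  have hdisj : Disjoint (rSet H K) A :=
    Set.disjoint_left.mpr fun v hvR hvA => nomatch hvR.2.symm.trans (hAsub hvA).2
  refine ⟨v, hv, hvc, ?_⟩
  rw [Set.ncard_union_eq hdisj, hsv]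
  omega

theorem stmt_3_general
    {V : Type*} [Fintype V]
    (H : LBG V)
    (hBG : IsBlockGraph H.graph)
    (ci : V)
    (Bij : Set V) (hEnd : EndBlockWith H.graph Bij ci)
    (A : Set V)
    (hAsub : A ⊆ {v | v ∈ Bij ∧ H.t v = TLabel.B})
    (hAcard : A.ncard = sSup {n : ℕ | ∃ v, v ∈ Bij ∧ v ≠ ci ∧ H.s v = n} - (rSet H Bij).ncard)
    (hApri : H.t ci = TLabel.B → A.Nonempty → ci ∈ A) :
    gam H = gam (relabelR H A) := by
  rcases A.eq_empty_or_nonempty with rfl | hA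
  · rw [relabelR_empty]
  obtain ⟨v₀, hv₀, hv₀c, hRA⟩ := exists_s_eq_ncard_rSet_union hAsub hAcard hA
  have hci : ci ∈ rSet H Bij ∪ A := by
    cases hcit : H.t ci
    · exact .inr (hApri hcit hA)
    · exact .inl ⟨hEnd.2.1, hcit⟩
  refine (gam_relabelR_eq fun L hL => ?_).symm
  have hv₀L : H.s v₀ ≤ (L ∩ Bij).ncard := by
    simpa [hEnd.cN_eq hBG hv₀ hv₀c, Set.inter_comm] using hL.2.1 v₀
  obtain ⟨L', hdiff, hRAL', hcard⟩ := exists_exchange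
    (Set.union_subset (fun v hv => hv.1) fun v hv => (hAsub hv).1) (hRA ▸ hv₀L)
  exact ⟨L', hL.relabelR_of_exchange (hEnd.coversOrTouches_cN hBG) hdiff hcard (hRAL' hci) hRAL',
    ncard_eq_of_exchange hdiff hcard⟩

theorem stmt_3
    {V : Type*} [Fintype V] [DecidableEq V]
    (H : LBG V)
    (hBG : IsBlockGraph H.graph)
    (hk : ∀ e : Sym2 V, H.k e ≤ 2)
    (ρ : {v : V // IsCutVertex H.graph v})
    (B' : {Bs : Set V // IsBlock H.graph Bs})
    (hsupp : IsSupportBlock H.graph ρ B')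
    (ch : V) (hchCut : IsCutVertex H.graph ch) (hchB : ch ∈ (B' : Set V))
    (hchMin : ∀ (c : V) (hc : IsCutVertex H.graph c), c ∈ (B' : Set V) →
      rootDist H.graph ρ (Sum.inr ⟨ch, hchCut⟩) ≤ rootDist H.graph ρ (Sum.inr ⟨c, hc⟩))
    (ci : V) (hciCut : IsCutVertex H.graph ci) (hciB : ci ∈ (B' : Set V)) (hcich : ci ≠ ch)
    (Bij : Set V) (hEnd : EndBlockWith H.graph Bij ci)
    (A : Set V)
    (hAsub : A ⊆ {v | v ∈ Bij ∧ H.t v = TLabel.B})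
    (hAcard : A.ncard = sSup {n : ℕ | ∃ v, v ∈ Bij ∧ v ≠ ci ∧ H.s v = n} - (rSet H Bij).ncard)
    (hApri : H.t ci = TLabel.B → A.Nonempty → ci ∈ A) :
    gam H = gam (relabelR H A) :=
  stmt_3_general H hBG ci Bij hEnd A hAsub hAcard hApri
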